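/- Let p be a prime and let (G,q) be an anisotropic pre-metric group such that q(g)^p = 1 for all g ∈ G. Then pG = 0 (so G is an 𝔽_p-vector space) and |G| ≤ p². -/

import Mathlib

/-!
Since `q (n • g) = q g ^ n²`, the element `p • g` is isotropic, hence zero. If `|G| > p²`,
pigeonhole on `g ↦ (b(u, g), b(v, g)) ∈ μ_p × μ_p` gives a nonzero `w` orthogonal to any two
elements `u, v`. For `p = 2` every nonzero `g` has `q g = -1`, so orthogonal nonzero elements
`u, w` have `q (u + w) = 1`, forcing `u = w`; so two distinct nonzero elements have no common
nonzero orthogonal element. For odd `p` we get pairwise orthogonal nonzero `g₁, g₂, g₃`, on whose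
span `q` is a diagonal ternary form over `𝔽_p` with values in `μ_p`, and such a form is isotropic.
-/

/-- The bicharacter associated with a `kˣ`-valued function `q` on `G`:
`b(g,h) = q(g+h) · q(g)⁻¹ · q(h)⁻¹`. -/
def bchar {k : Type*} [Field k] {G : Type*} [AddCommGroup G] (q : G → kˣ) (g h : G) : kˣ :=
  q (g + h) * (q g)⁻¹ * (q h)⁻¹

/-- `q : G → kˣ` is a quadratic form: `q (-g) = q g` for all `g`, and the associated
function `bchar q` is bimultiplicative. -/
structure IsQuadForm {k : Type*} [Field k] {G : Type*} [AddCommGroup G] (q : G → kˣ) : Prop where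
  map_neg : ∀ g : G, q (-g) = q g
  bchar_add_left : ∀ g₁ g₂ h : G, bchar q (g₁ + g₂) h = bchar q g₁ h * bchar q g₂ h
  bchar_add_right : ∀ g h₁ h₂ : G, bchar q g (h₁ + h₂) = bchar q g h₁ * bchar q g h₂

/-- The Gauss sum `τ⁺(G,q) = ∑_{g ∈ G} q(g)`, as an element of `k`. -/
noncomputable def tauPlus {k : Type*} [Field k] {G : Type*} [AddCommGroup G] (q : G → kˣ) : k :=
  ∑ᶠ g : G, (q g : k)

/-- The Gauss sum `τ⁻(G,q) = ∑_{g ∈ G} q(g)⁻¹`, as an element of `k`. -/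
noncomputable def tauMinus {k : Type*} [Field k] {G : Type*} [AddCommGroup G] (q : G → kˣ) : k :=
  ∑ᶠ g : G, (((q g)⁻¹ : kˣ) : k)

/-- Non-degeneracy of (the bicharacter associated with) `q` : the map
`g ↦ b(g, ·)` from `G` to `Hom(G, kˣ)` is injective. -/
def Nondeg {k : Type*} [Field k] {G : Type*} [AddCommGroup G] (q : G → kˣ) : Prop :=
  Function.Injective fun g : G => fun h : G => bchar q g h

/-- Isomorphism of pre-metric groups: a group isomorphism `φ : G₁ ≃ G₂`
with `q₂ ∘ φ = q₁`. -/
def PMIso {k : Type*} [Field k] {G₁ : Type*} [AddCommGroup G₁] {G₂ : Type*} [AddCommGroup G₂]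
    (q₁ : G₁ → kˣ) (q₂ : G₂ → kˣ) : Prop :=
  ∃ φ : G₁ ≃+ G₂, ∀ g : G₁, q₂ (φ g) = q₁ g

section Bicharacter

variable {k : Type*} [Field k] {G : Type*} [AddCommGroup G]

theorem apply_add_eq_mul_bchar (q : G → kˣ) (g h : G) : q (g + h) = q g * q h * bchar q g h := by
  rw [bchar, mul_assoc (q (g + h)), ← mul_inv, ← div_eq_mul_inv, mul_div_cancel]

theorem bchar_comm (q : G → kˣ) (g h : G) : bchar q g h = bchar q h g := by
  simp only [bchar, add_comm g h]
  exact mul_right_comm _ _ _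

theorem bchar_pow_eq_one {q : G → kˣ} {n : ℕ} (hqn : ∀ g, q g ^ n = 1) (g h : G) :
    bchar q g h ^ n = 1 := by
  simp [bchar, mul_pow, hqn]

theorem apply_add_of_bchar_eq_one {q : G → kˣ} {g h : G} (hgh : bchar q g h = 1) :
    q (g + h) = q g * q h := by
  rw [apply_add_eq_mul_bchar q, hgh, mul_one]

def IsAnisotropic (q : G → kˣ) : Prop :=
  ∀ g : G, g ≠ 0 → q g ≠ 1

end Bicharacter

theorem Units.exists_pow_sq_mul_pow_sq_mul_eq_one {K : Type*} [Field K] {p : ℕ} (hp : p.Prime)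
    (hodd : Odd p) {a b c : Kˣ} (ha : a ^ p = 1) (ha1 : a ≠ 1) (hb : b ^ p = 1) (hb1 : b ≠ 1)
    (hc : c ^ p = 1) : ∃ x y : ℕ, a ^ x ^ 2 * b ^ y ^ 2 * c = 1 := by
  have := Fact.mk hp
  -- `a` generates `μ_p`; writing `b = a ^ β`, `c = a ^ γ`, solve `x² + β y² + γ = 0` in `𝔽_p`.
  have hζ : IsPrimitiveRoot a p := IsPrimitiveRoot.iff_orderOf.2 (orderOf_eq_prime ha ha1)
  obtain ⟨β, -, rfl⟩ := hζ.eq_pow_of_mem_rootsOfUnity ((mem_rootsOfUnity _ _).2 hb)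
  obtain ⟨γ, -, rfl⟩ := hζ.eq_pow_of_mem_rootsOfUnity ((mem_rootsOfUnity _ _).2 hc)
  have hβ : (β : ZMod p) ≠ 0 := by
    rwa [Ne, ZMod.natCast_eq_zero_iff, ← hζ.pow_eq_one_iff_dvd]
  open Polynomial in
  obtain ⟨x, y, hxy⟩ := FiniteField.exists_root_sum_quadratic (f := X ^ 2)
    (g := C (β : ZMod p) * X ^ 2 + C (γ : ZMod p)) (by compute_degree!) (by compute_degree!)
    (by rwa [ZMod.card, ← Nat.odd_iff])
  refine ⟨x.val, y.val, ?_⟩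
  rw [← pow_mul, ← pow_add, ← pow_add, hζ.pow_eq_one_iff_dvd, ← ZMod.natCast_eq_zero_iff]
  push_cast
  simpa [ZMod.natCast_val, add_assoc, mul_comm] using hxy

namespace IsQuadForm

variable {k : Type*} [Field k] {G : Type*} [AddCommGroup G] {q : G → kˣ}

theorem bchar_zero_right (hq : IsQuadForm q) (g : G) : bchar q g 0 = 1 := by
  simpa using hq.bchar_add_right g 0 0

theorem bchar_zero_left (hq : IsQuadForm q) (h : G) : bchar q 0 h = 1 := by
  rw [bchar_comm, hq.bchar_zero_right]

theorem map_zero (hq : IsQuadForm q) : q 0 = 1 := by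
  simpa [bchar] using hq.bchar_zero_left 0

theorem bchar_self (hq : IsQuadForm q) (g : G) : bchar q g g = q g ^ 2 := by
  have h := hq.bchar_add_right g g (-g)
  rw [add_neg_cancel, hq.bchar_zero_right] at h
  have hneg : bchar q g (-g) = (q g ^ 2)⁻¹ := by
    simp only [bchar, add_neg_cancel, hq.map_zero, hq.map_neg]
    group
  rw [hneg] at h
  exact eq_of_mul_inv_eq_one h.symm

theorem bchar_nsmul_right (hq : IsQuadForm q) (n : ℕ) (g h : G) :
    bchar q g (n • h) = bchar q g h ^ n := by
  induction n with
  | zero => rw [zero_smul, hq.bchar_zero_right, pow_zero]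
  | succ n ih => rw [succ_nsmul, hq.bchar_add_right, ih, pow_succ]

theorem bchar_nsmul_left (hq : IsQuadForm q) (n : ℕ) (g h : G) :
    bchar q (n • g) h = bchar q g h ^ n := by
  rw [bchar_comm, hq.bchar_nsmul_right, bchar_comm]

theorem map_nsmul (hq : IsQuadForm q) (n : ℕ) (g : G) : q (n • g) = q g ^ n ^ 2 := by
  induction n with
  | zero => simp [hq.map_zero]
  | succ n ih =>
    rw [succ_nsmul, apply_add_eq_mul_bchar q, ih, hq.bchar_nsmul_left, hq.bchar_self, ← pow_succ,
      ← pow_mul, ← pow_add]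
    ring_nf

theorem bchar_sub_right_eq_one_iff (hq : IsQuadForm q) (g h₁ h₂ : G) :
    bchar q g (h₁ - h₂) = 1 ↔ bchar q g h₁ = bchar q g h₂ := by
  rw [← sub_add_cancel h₁ h₂, hq.bchar_add_right, add_sub_cancel_right, mul_eq_right]

theorem nsmul_eq_zero (hq : IsQuadForm q) (han : IsAnisotropic q) {n : ℕ}
    (hqn : ∀ g, q g ^ n = 1) (g : G) : n • g = 0 := by
  by_contra hng
  exact han _ hng (by rw [hq.map_nsmul, sq, pow_mul, hqn, one_pow])

theorem exists_ne_zero_bchar_eq_one [Finite G] (hq : IsQuadForm q) {n : ℕ} [NeZero n]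
    (hqn : ∀ g, q g ^ n = 1) (hcard : n ^ 2 < Nat.card G) (u v : G) :
    ∃ w ≠ 0, bchar q u w = 1 ∧ bchar q v w = 1 := by
  let f : G → rootsOfUnity n k × rootsOfUnity n k := fun g =>
    (⟨bchar q u g, (mem_rootsOfUnity _ _).2 (bchar_pow_eq_one hqn u g)⟩,
      ⟨bchar q v g, (mem_rootsOfUnity _ _).2 (bchar_pow_eq_one hqn v g)⟩)
  have hf : ¬ Function.Injective f := fun hf => by
    have := Nat.card_le_card_of_injective f hf
    rw [Nat.card_prod] at this
    nlinarith [card_rootsOfUnity k n]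
  obtain ⟨a, b, hfab, hab⟩ := Function.not_injective_iff.1 hf
  simp only [f, Prod.mk.injEq, Subtype.mk.injEq] at hfab
  exact ⟨a - b, sub_ne_zero.2 hab, (hq.bchar_sub_right_eq_one_iff _ _ _).2 hfab.1,
    (hq.bchar_sub_right_eq_one_iff _ _ _).2 hfab.2⟩

theorem eq_of_bchar_eq_one_of_sq_eq_one (hq : IsQuadForm q) (han : IsAnisotropic q)
    (hq2 : ∀ g, q g ^ 2 = 1) {u w : G} (hu : u ≠ 0) (hw : w ≠ 0) (huw : bchar q u w = 1) :
    u = w := by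
  have val_eq_neg_one : ∀ g, g ≠ 0 → (q g : k) = -1 := fun g hg =>
    (sq_eq_one_iff.1 (by rw [← Units.val_pow_eq_pow_val, hq2 g, Units.val_one])).resolve_left
      fun h => han g hg (Units.val_eq_one.1 h)
  have hsum : q (u + w) = 1 := Units.ext <| by
    rw [apply_add_of_bchar_eq_one huw, Units.val_mul, val_eq_neg_one u hu, val_eq_neg_one w hw,
      Units.val_one, neg_one_mul, neg_neg]
  have huw0 : u + w = 0 := not_not.1 fun h => han _ h hsum
  calc u = -w := eq_neg_of_add_eq_zero_left huw0
    _ = w := neg_eq_of_add_eq_zero_left (two_nsmul w ▸ hq.nsmul_eq_zero han hq2 w)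

theorem card_le_four [Finite G] (hq : IsQuadForm q) (han : IsAnisotropic q)
    (hq2 : ∀ g, q g ^ 2 = 1) : Nat.card G ≤ 2 ^ 2 := by
  by_contra! hcard
  have := Fintype.ofFinite G
  obtain ⟨a, b, c, hab, hac, hbc⟩ :=
    (Fintype.two_lt_card_iff (α := G)).1 (by rw [← Nat.card_eq_fintype_card]; omega)
  obtain ⟨w, hw, hbw, hcw⟩ := hq.exists_ne_zero_bchar_eq_one hq2 hcard (b - a) (c - a)
  have hb : b - a = w :=
    hq.eq_of_bchar_eq_one_of_sq_eq_one han hq2 (sub_ne_zero.2 hab.symm) hw hbw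
  have hc : c - a = w :=
    hq.eq_of_bchar_eq_one_of_sq_eq_one han hq2 (sub_ne_zero.2 hac.symm) hw hcw
  exact hbc (sub_left_injective (hb.trans hc.symm))

theorem eq_zero_of_bchar_self_eq_one (hq : IsQuadForm q) (han : IsAnisotropic q) {n : ℕ}
    (hodd : Odd n) (hqn : ∀ g, q g ^ n = 1) {g : G} (hg : bchar q g g = 1) : g = 0 := by
  by_contra hg0
  refine han g hg0 ?_
  have h := pow_gcd_eq_one.2 ⟨hq.bchar_self g ▸ hg, hqn g⟩
  rwa [Nat.Coprime.gcd_eq_one (Nat.coprime_two_left.2 hodd), pow_one] at h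

theorem nsmul_eq_zero_of_bchar_nsmul_add_eq_one (hq : IsQuadForm q) (han : IsAnisotropic q)
    {n : ℕ} (hodd : Odd n) (hqn : ∀ g, q g ^ n = 1) {g h : G} (x : ℕ) (hgh : bchar q g h = 1)
    (hg : bchar q g (x • g + h) = 1) : x • g = 0 := by
  rw [hq.bchar_add_right, hgh, mul_one] at hg
  exact hq.eq_zero_of_bchar_self_eq_one han hodd hqn (by rw [hq.bchar_nsmul_left, hg, one_pow])

theorem card_le_sq_of_odd [Finite G] (hq : IsQuadForm q) (han : IsAnisotropic q) {p : ℕ}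
    (hp : p.Prime) (hodd : Odd p) (hqp : ∀ g, q g ^ p = 1) : Nat.card G ≤ p ^ 2 := by
  by_contra! hcard
  have : NeZero p := ⟨hp.ne_zero⟩
  have : Nontrivial G :=
    Finite.one_lt_card_iff_nontrivial.1 ((Nat.one_le_pow _ _ hp.pos).trans_lt hcard)
  obtain ⟨g₁, hg₁⟩ := exists_ne (0 : G)
  obtain ⟨g₂, hg₂, h₁₂, -⟩ := hq.exists_ne_zero_bchar_eq_one hqp hcard g₁ g₁
  obtain ⟨g₃, hg₃, h₁₃, h₂₃⟩ := hq.exists_ne_zero_bchar_eq_one hqp hcard g₁ g₂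
  obtain ⟨x, y, hxy⟩ := Units.exists_pow_sq_mul_pow_sq_mul_eq_one hp hodd (hqp g₁) (han g₁ hg₁)
    (hqp g₂) (han g₂ hg₂) (hqp g₃)
  have hqv : q (x • g₁ + (y • g₂ + g₃)) = 1 := by
    have h₁ : bchar q (x • g₁) (y • g₂ + g₃) = 1 := by
      simp [hq.bchar_nsmul_left, hq.bchar_add_right, hq.bchar_nsmul_right, h₁₂, h₁₃]
    have h₂ : bchar q (y • g₂) g₃ = 1 := by rw [hq.bchar_nsmul_left, h₂₃, one_pow]
    rw [apply_add_of_bchar_eq_one h₁, apply_add_of_bchar_eq_one h₂, hq.map_nsmul, hq.map_nsmul,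
      ← mul_assoc, hxy]
  refine han _ (fun hv0 => hg₃ ?_) hqv
  have hx : x • g₁ = 0 :=
    hq.nsmul_eq_zero_of_bchar_nsmul_add_eq_one han hodd hqp x (h := y • g₂ + g₃)
    (by rw [hq.bchar_add_right, hq.bchar_nsmul_right, h₁₂, h₁₃, one_pow, one_mul])
    (by rw [hv0, hq.bchar_zero_right])
  have hy : y • g₂ = 0 :=
    hq.nsmul_eq_zero_of_bchar_nsmul_add_eq_one han hodd hqp y (h := x • g₁ + g₃)
    (by rw [hq.bchar_add_right, hq.bchar_nsmul_right, bchar_comm, h₁₂, h₂₃, one_pow, one_mul])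
    (by rw [add_left_comm, hv0, hq.bchar_zero_right])
  simpa [hx, hy] using hv0

end IsQuadForm

theorem anisotropic_with_p_torsion_values_general
    {k : Type*} [Field k]
    {G : Type*} [AddCommGroup G] [Finite G]
    (p : ℕ) (hp : p.Prime)
    (q : G → kˣ) (hq : IsQuadForm q)
    (han : ∀ g : G, g ≠ 0 → q g ≠ 1)
    (hqp : ∀ g : G, q g ^ p = 1) :
    (∀ g : G, p • g = 0) ∧ Nat.card G ≤ p ^ 2 := by
  refine ⟨hq.nsmul_eq_zero han hqp, ?_⟩
  rcases hp.eq_two_or_odd' with rfl | hodd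
  · exact hq.card_le_four han hqp
  · exact hq.card_le_sq_of_odd han hp hodd hqp

/-- If `(G,q)` is an anisotropic pre-metric group with `q(g)^p = 1` for
all `g`, then `pG = 0` and `|G| ≤ p²`. -/
theorem anisotropic_with_p_torsion_values
    {k : Type*} [Field k] [IsAlgClosed k] [CharZero k]
    {G : Type*} [AddCommGroup G] [Finite G]
    (p : ℕ) (hp : p.Prime)
    (q : G → kˣ) (hq : IsQuadForm q)
    (han : ∀ g : G, g ≠ 0 → q g ≠ 1)
    (hqp : ∀ g : G, q g ^ p = 1) :
    (∀ g : G, p • g = 0) ∧ Nat.card G ≤ p ^ 2 :=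
  anisotropic_with_p_torsion_values_general p hp q hq han hqp
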